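/- arXiv:2601.00209 — 9 statements merged into one kernel-verified Lean document; each statement's English description precedes it below -/
import Mathlib

section
/- Let Q be a poset in which every downset {p : p ≤ q} is finite, and let F : C → Q be an initial functor from a small category C. Then every element q ∈ Q whose strict downset {p : p < q} is disconnected (including empty) lies in the image of F on objects. -/
open CategoryTheory

/-- A single comparability step within `S` with respect to the relation `r`. -/
def StepIn {α : Type*} (S : Set α) (r : α → α → Prop) (x y : α) : Prop :=
  x ∈ S ∧ y ∈ S ∧ (r x y ∨ r y x)

/-- Connectivity of the set `S` equipped with the relation `r`: `S` is nonempty and any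
two elements of `S` are joined by a finite zigzag of `r`-steps within `S`. -/
def ConnIn {α : Type*} (S : Set α) (r : α → α → Prop) : Prop :=
  S.Nonempty ∧ ∀ a ∈ S, ∀ b ∈ S, Relation.ReflTransGen (StepIn S r) a b

/-- Connectivity of a subset of a poset, as a subposet (zigzags of comparabilities). -/
def PosetConn {α : Type*} [LE α] (S : Set α) : Prop := ConnIn S (· ≤ ·)

/-- `a` and `b` lie in `S` in the same connected component of the subposet `S`. -/
def SameComp {α : Type*} [LE α] (S : Set α) (a b : α) : Prop :=
  a ∈ S ∧ b ∈ S ∧ Relation.ReflTransGen (StepIn S (· ≤ ·)) a b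

/-
If `q` is not in the image of `F`, every arrow `F c ⟶ q` lands strictly below `q`,
so the connected comma category `F ↓ q` maps onto a connected piece of the strict downset of
`q`. Each `a < q` is itself above some `F c` (as `F ↓ a` is nonempty), so every element of the
downset is comparable to a point of that piece, and the downset is connected.
-/

instance StepIn.instSymm {α : Type*} (S : Set α) (r : α → α → Prop) : Std.Symm (StepIn S r) where
  symm _ _ h := ⟨h.2.1, h.1, h.2.2.symm⟩

theorem ConnIn.of_reflTransGen_to {α : Type*} {S : Set α} {r : α → α → Prop} {x : α}
    (hx : x ∈ S) (h : ∀ a ∈ S, Relation.ReflTransGen (StepIn S r) a x) : ConnIn S r :=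
  ⟨⟨x, hx⟩, fun a ha b hb => (h a ha).trans (symm (h b hb))⟩

theorem reflTransGen_stepIn_obj {J Q : Type*} [Category J] [IsPreconnected J] [Preorder Q]
    (G : J ⥤ Q) {S : Set Q} (hS : ∀ j, G.obj j ∈ S) (j j' : J) :
    Relation.ReflTransGen (StepIn S (· ≤ ·)) (G.obj j) (G.obj j') := by
  refine (isPreconnected_zigzag j j').lift G.obj fun a b hab => ⟨hS a, hS b, ?_⟩
  rcases hab with ⟨⟨f⟩⟩ | ⟨⟨f⟩⟩
  · exact .inl (G.map f).le
  · exact .inr (G.map f).le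

theorem posetConn_Iio_of_forall_obj_ne {Q C : Type*} [PartialOrder Q] [Category C]
    (F : C ⥤ Q) [F.Initial] (q : Q) (hq : ∀ c, F.obj c ≠ q) : PosetConn (Set.Iio q) := by
  let G := CostructuredArrow.proj F q ⋙ F
  have hG : ∀ X, G.obj X ∈ Set.Iio q := fun X => X.hom.le.lt_of_ne (hq X.left)
  obtain ⟨X₀⟩ : Nonempty (CostructuredArrow F q) := inferInstance
  refine ConnIn.of_reflTransGen_to (hG X₀) fun a ha => ?_
  obtain ⟨Y⟩ : Nonempty (CostructuredArrow F a) := inferInstance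
  let Y' : CostructuredArrow F q := .mk (Y.hom ≫ homOfLE ha.le)
  have hstep : StepIn (Set.Iio q) (· ≤ ·) a (G.obj Y') := ⟨ha, hG Y', .inr Y.hom.le⟩
  exact .head hstep (reflTransGen_stepIn_obj G hG Y' X₀)

theorem stmt4_general {Q : Type} [PartialOrder Q]
    {C : Type} [SmallCategory C] (F : C ⥤ Q) [F.Initial] :
    ∀ q : Q, ¬ PosetConn (Set.Iio q) → ∃ c : C, F.obj c = q := by
  intro q hq
  by_contra! hne
  exact hq (posetConn_Iio_of_forall_obj_ne F q hne)

/-- Let `Q` be a poset with finite downsets and `F : C ⥤ Q` an initial functor from a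
small category. Then every `q : Q` whose strict downset is disconnected (including
empty) lies in the image of `F` on objects. -/
theorem stmt4 {Q : Type} [PartialOrder Q] (hfin : ∀ q : Q, (Set.Iic q).Finite)
    {C : Type} [SmallCategory C] (F : C ⥤ Q) [F.Initial] :
    ∀ q : Q, ¬ PosetConn (Set.Iio q) → ∃ c : C, F.obj c = q :=
  stmt4_general F
end

section
/- Every poset Q with finite downsets has an initial scaffold; i.e., there exists a subposet P ⊆ Q whose elements are exactly the q ∈ Q with disconnected strict downset, and which for each such q and each connected component A of its strict downset contains exactly one relation m < q with m a minimum of Q contained in A. -/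
/-- An initial scaffold of the poset `α`: a subposet whose elements are exactly the
elements with disconnected (possibly empty) strict downset, and whose non-identity
relations `r` consist, for each such element `b` and each connected component of the
strict downset of `b`, of exactly one relation `m < b` with `m` a minimum of `α` in
that component. -/
def IsScaffold {α : Type*} [PartialOrder α] (P : Set α) (r : α → α → Prop) : Prop :=
  P = {q | ¬ PosetConn (Set.Iio q)} ∧
  (∀ a b, r a b → IsMin a ∧ a < b ∧ b ∈ P) ∧
  (∀ b ∈ P, ∀ x ∈ Set.Iio b, ∃! m, r m b ∧ SameComp (Set.Iio b) m x)

/-!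
Lying in the same component of `Iio b` is an equivalence relation on `Iio b`, and since
downsets are finite every `x < b` lies above a minimum of `Q`, which is then in the component
of `x`. Taking in each component the least such minimum for a well-ordering of `Q` gives the
relations of the scaffold.
-/

section SameComp

variable {α : Type*} [LE α] {S : Set α} {a b c : α}

lemma SameComp.refl (ha : a ∈ S) : SameComp S a a :=
  ⟨ha, ha, .refl⟩

lemma SameComp.of_le (ha : a ∈ S) (hb : b ∈ S) (hab : a ≤ b) : SameComp S a b :=
  ⟨ha, hb, .single ⟨ha, hb, .inl hab⟩⟩

lemma SameComp.symm (h : SameComp S a b) : SameComp S b a :=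
  have : Std.Symm (StepIn S (· ≤ ·)) := ⟨fun _ _ ⟨hx, hy, hxy⟩ => ⟨hy, hx, hxy.symm⟩⟩
  ⟨h.2.1, h.1, _root_.symm h.2.2⟩

lemma SameComp.trans (h : SameComp S a b) (h' : SameComp S b c) : SameComp S a c :=
  ⟨h.1, h'.2.1, h.2.2.trans h'.2.2⟩

end SameComp

theorem exists_transversal_of_forall_exists {α : Type*} (R : α → α → Prop) (p : α → Prop)
    (hsymm : ∀ {x y}, R x y → R y x) (htrans : ∀ {x y z}, R x y → R y z → R x z)
    (hp : ∀ x, R x x → ∃ m, p m ∧ R m x) :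
    ∃ T : Set α, (∀ m ∈ T, p m ∧ R m m) ∧ ∀ x, R x x → ∃! m, m ∈ T ∧ R m x := by
  let T : Set α := {m | p m ∧ R m m ∧ ∀ m', p m' → R m' m → ¬ WellOrderingRel m' m}
  refine ⟨T, fun m hm => ⟨hm.1, hm.2.1⟩, fun x hx => ?_⟩
  obtain ⟨m₀, hm₀⟩ := hp x hx
  obtain ⟨m, ⟨hpm, hmx⟩, hleast⟩ :=
    WellOrderingRel.isWellOrder.wf.has_min {y | p y ∧ R y x} ⟨m₀, hm₀⟩
  have hmT : m ∈ T :=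
    ⟨hpm, htrans hmx (hsymm hmx), fun m' hm' hm'm => hleast m' ⟨hm', htrans hm'm hmx⟩⟩
  refine ⟨m, ⟨hmT, hmx⟩, ?_⟩
  rintro m' ⟨⟨hpm', -, hleast'⟩, hm'x⟩
  rcases trichotomous_of WellOrderingRel m' m with hlt | heq | hgt
  · exact absurd hlt (hleast m' ⟨hpm', hm'x⟩)
  · exact heq
  · exact absurd hgt (hleast' m hpm (htrans hmx (hsymm hm'x)))

lemma exists_isMin_le {Q : Type*} [PartialOrder Q] {x : Q} (hx : (Set.Iic x).Finite) :
    ∃ m, IsMin m ∧ m ≤ x := by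
  obtain ⟨m, hmx, hmin⟩ := hx.exists_le_minimal Set.self_mem_Iic
  exact ⟨m, ((minimal_iff_isMin fun _ _ hy hle => hle.trans hy).1 hmin).2, hmx⟩

lemma exists_isMin_sameComp_Iio {Q : Type*} [PartialOrder Q] {b x : Q}
    (hx : (Set.Iic x).Finite) (hxb : x < b) : ∃ m, IsMin m ∧ SameComp (Set.Iio b) m x := by
  obtain ⟨m, hm, hmx⟩ := exists_isMin_le hx
  exact ⟨m, hm, .of_le (hmx.trans_lt hxb) hxb hmx⟩

/-- Every poset with finite downsets has an initial scaffold. -/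
theorem stmt6 {Q : Type} [PartialOrder Q] (hfin : ∀ q : Q, (Set.Iic q).Finite) :
    ∃ (P : Set Q) (r : Q → Q → Prop), IsScaffold P r := by
  have hT : ∀ b : Q, ∃ T : Set Q, (∀ m ∈ T, IsMin m ∧ SameComp (Set.Iio b) m m) ∧
      ∀ x, SameComp (Set.Iio b) x x → ∃! m, m ∈ T ∧ SameComp (Set.Iio b) m x :=
    fun b => exists_transversal_of_forall_exists _ _ SameComp.symm SameComp.trans
      fun x hx => exists_isMin_sameComp_Iio (hfin x) hx.1
  choose T hTsub hTunique using hT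
  let P : Set Q := {q | ¬ PosetConn (Set.Iio q)}
  refine ⟨P, fun m b => m ∈ T b ∧ b ∈ P, rfl, fun a b ⟨ha, hb⟩ => ?_, fun b hb x hx => ?_⟩
  · exact ⟨(hTsub b a ha).1, (hTsub b a ha).2.1, hb⟩
  · obtain ⟨m, ⟨hm, hmx⟩, huniq⟩ := hTunique b x (.refl hx)
    exact ⟨m, ⟨⟨hm, hb⟩, hmx⟩, fun m' ⟨⟨hm', _⟩, hm'x⟩ => huniq m' ⟨hm', hm'x⟩⟩
end

section
/- Let Q be a poset with finite downsets, P ⊆ Q an initial scaffold, and q ∈ Q. Then the inclusion of the subposet P ∩ {p : p < q} (with relations from P) into the strict downset {p ∈ Q : p < q} induces a bijection on sets of connected components. -/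
set_option linter.unusedSectionVars false

section Aux
variable {Q : Type} [PartialOrder Q] {P : Set Q} {r : Q → Q → Prop}

lemma stepin_mono {r : Q → Q → Prop} {S T : Set Q} (h : S ⊆ T) {a b : Q}
    (hab : Relation.ReflTransGen (StepIn S r) a b) :
    Relation.ReflTransGen (StepIn T r) a b := by
  induction hab with
  | refl => exact .refl
  | tail _ hst ih => exact ih.tail ⟨h hst.1, h hst.2.1, hst.2.2⟩

lemma rtg_symm {r : Q → Q → Prop} {S : Set Q} {a b : Q}
    (h : Relation.ReflTransGen (StepIn S r) a b) :
    Relation.ReflTransGen (StepIn S r) b a := by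
  induction h with
  | refl => exact .refl
  | tail _ hst ih => exact Relation.ReflTransGen.head ⟨hst.2.1, hst.1, hst.2.2.symm⟩ ih

lemma wf_lt (hfin : ∀ q : Q, (Set.Iic q).Finite) :
    WellFounded ((· < ·) : Q → Q → Prop) := by
  have key : ∀ n : ℕ, ∀ x : Q, (hfin x).toFinset.card ≤ n → Acc (· < ·) x := by
    intro n
    induction n with
    | zero =>
      intro x hx
      have hxm : x ∈ (hfin x).toFinset := (hfin x).mem_toFinset.2 (Set.mem_Iic.2 le_rfl)
      have := Finset.card_pos.2 ⟨x, hxm⟩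
      omega
    | succ n ih =>
      intro x hx
      constructor
      intro y hy
      apply ih
      have hss : (hfin y).toFinset ⊂ (hfin x).toFinset := by
        constructor
        · intro z hz
          simp only [Set.Finite.mem_toFinset, Set.mem_Iic] at *
          exact hz.trans hy.le
        · intro hsub
          have hxm : x ∈ (hfin x).toFinset := (hfin x).mem_toFinset.2 (Set.mem_Iic.2 le_rfl)
          have := (hfin y).mem_toFinset.1 (hsub hxm)
          exact hy.not_ge (Set.mem_Iic.1 this)
      have := Finset.card_lt_card hss
      omega
  constructor
  intro x
  exact key _ x le_rfl

lemma min_mem_scaffold (hP : IsScaffold P r) {m : Q} (hm : IsMin m) : m ∈ P := by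
  rw [hP.1]
  intro h
  obtain ⟨y, hy⟩ := h.1
  exact hy.not_ge (hm hy.le)

lemma exists_rep (hfin : ∀ q : Q, (Set.Iic q).Finite) (hP : IsScaffold P r) :
    ∀ x : Q, ∃ m ∈ P, m ≤ x := by
  intro x
  induction x using (wf_lt hfin).induction with
  | _ x ih =>
    by_cases hx : x ∈ P
    · exact ⟨x, hx, le_rfl⟩
    · have hconn : PosetConn (Set.Iio x) := by
        rw [hP.1] at hx; simpa using hx
      obtain ⟨y, hy⟩ := hconn.1
      obtain ⟨m, hm, hmy⟩ := ih y hy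
      exact ⟨m, hm, hmy.trans hy.le⟩

def AStmt (P : Set Q) (r : Q → Q → Prop) (x : Q) : Prop :=
  ∀ m ∈ P, ∀ m' ∈ P, m ≤ x → m' ≤ x →
    Relation.ReflTransGen (StepIn (P ∩ Set.Iic x) r) m m'

lemma Tgen (hfin : ∀ q : Q, (Set.Iic q).Finite) (hP : IsScaffold P r) (c : Q)
    (hA : ∀ y, y < c → AStmt P r y) :
    ∀ u v : Q, Relation.ReflTransGen (StepIn (Set.Iio c) (· ≤ ·)) u v → u ∈ Set.Iio c →
      ∀ m ∈ P, ∀ m' ∈ P, m ≤ u → m' ≤ v →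
      Relation.ReflTransGen (StepIn (P ∩ Set.Iio c) r) m m' := by
  have hsub : ∀ w : Q, w < c → P ∩ Set.Iic w ⊆ P ∩ Set.Iio c := by
    intro w hw a ha
    exact ⟨ha.1, lt_of_le_of_lt ha.2 hw⟩
  intro u v huv
  induction huv with
  | refl =>
    intro hu m hm m' hm' hmu hm'u
    exact stepin_mono (hsub u hu) (hA u hu m hm m' hm' hmu hm'u)
  | @tail y z hxy hyz ih =>
    intro hu m hm m' hm' hmu hm'z
    obtain ⟨n, hn, hny⟩ := exists_rep hfin hP y
    have h1 := ih hu m hm n hn hmu hny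
    obtain ⟨hyc, hzc, hle⟩ := hyz
    cases hle with
    | inl h =>
      exact h1.trans (stepin_mono (hsub z hzc) (hA z hzc n hn m' hm' (hny.trans h) hm'z))
    | inr h =>
      exact h1.trans (stepin_mono (hsub y hyc) (hA y hyc n hn m' hm' hny (hm'z.trans h)))

lemma Amain (hfin : ∀ q : Q, (Set.Iic q).Finite) (hP : IsScaffold P r) :
    ∀ x : Q, AStmt P r x := by
  intro x
  induction x using (wf_lt hfin).induction with
  | _ x ih =>
  intro m hm m' hm' hmx hm'x
  have T := Tgen hfin hP x ih
  have hsub : P ∩ Set.Iio x ⊆ P ∩ Set.Iic x := fun a ha => ⟨ha.1, ha.2.le⟩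
  have hxstep : ∀ m'' ∈ P, m'' < x → x ∈ P →
      Relation.ReflTransGen (StepIn (P ∩ Set.Iic x) r) x m'' := by
    intro m'' hm'' hlt hxP
    obtain ⟨n, ⟨hrn, hsc⟩, _⟩ := hP.2.2 x hxP m'' hlt
    have hfacts := hP.2.1 n x hrn
    have hnP : n ∈ P := min_mem_scaffold hP hfacts.1
    have hnx : n < x := hfacts.2.1
    have step1 : Relation.ReflTransGen (StepIn (P ∩ Set.Iic x) r) x n :=
      .single ⟨⟨hxP, le_rfl⟩, ⟨hnP, hnx.le⟩, Or.inr hrn⟩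
    have step2 := T n m'' hsc.2.2 hsc.1 n hnP m'' hm'' le_rfl le_rfl
    exact step1.trans (stepin_mono hsub step2)
  rcases eq_or_lt_of_le hmx with rfl | hmlt
  · rcases eq_or_lt_of_le hm'x with rfl | hm'lt
    · exact .refl
    · exact hxstep m' hm' hm'lt hm
  · rcases eq_or_lt_of_le hm'x with rfl | hm'lt
    · exact rtg_symm (hxstep m hm hmlt hm')
    · by_cases hsc : Relation.ReflTransGen (StepIn (Set.Iio x) (· ≤ ·)) m m'
      · exact stepin_mono hsub (T m m' hsc hmlt m hm m' hm' le_rfl le_rfl)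
      · have hxP : x ∈ P := by
          rw [hP.1]
          intro hconn
          exact hsc (hconn.2 m hmlt m' hm'lt)
        exact (rtg_symm (hxstep m hm hmlt hxP)).trans (hxstep m' hm' hm'lt hxP)

end Aux

/-- Let `Q` be a poset with finite downsets, `(P, r)` an initial scaffold, and `q : Q`.
The inclusion of the subposet `P ∩ {p | p < q}` (with the relations of `P`) into the
strict downset `{p | p < q}` induces a bijection on connected components: the induced
map is surjective (every component of the strict downset meets `P`) and injective
(elements of `P ∩ {p | p < q}` connected in the strict downset are already connected
within `P ∩ {p | p < q}` via relations of `P`). -/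
theorem stmt7 {Q : Type} [PartialOrder Q] (hfin : ∀ q : Q, (Set.Iic q).Finite)
    (P : Set Q) (r : Q → Q → Prop) (hP : IsScaffold P r) (q : Q) :
    (∀ x ∈ Set.Iio q, ∃ m ∈ P ∩ Set.Iio q, SameComp (Set.Iio q) m x) ∧
    (∀ a ∈ P ∩ Set.Iio q, ∀ b ∈ P ∩ Set.Iio q, SameComp (Set.Iio q) a b →
      Relation.ReflTransGen (StepIn (P ∩ Set.Iio q) r) a b) := by
  constructor
  · intro x hx
    obtain ⟨m, hm, hmx⟩ := exists_rep hfin hP x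
    have hmq : m ∈ Set.Iio q := lt_of_le_of_lt hmx hx
    exact ⟨m, ⟨hm, hmq⟩, hmq, hx, .single ⟨hmq, hx, Or.inl hmx⟩⟩
  · rintro a ⟨haP, haq⟩ b ⟨hbP, hbq⟩ ⟨_, _, hrtg⟩
    exact Tgen hfin hP q (fun y _ => Amain hfin hP y) a b hrtg haq a haP b hbP le_rfl le_rfl
end

section
/- Let U ⊆ ℕ^d be an upset (i.e., U = {x : x ≥ s for some s ∈ S} for some S ⊆ ℕ^d) and let z ∈ U. Let T be the full subposet of the strict downset D = {y ∈ U : y < z} consisting of those y with ‖y − z‖₁ ≤ 2 (i.e., the coordinates of z − y sum to at most 2). Then the inclusion T ↪ D induces a bijection on sets of connected components. -/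
section Aux

variable {d : ℕ}

lemma sum_sub_one (z w : Fin d → ℕ) (i : Fin d) (hi : 1 ≤ z i)
    (hw : ∀ k, w k = if k = i then z i - 1 else z k) :
    ∑ k, (z k - w k) = 1 := by
  have h : ∀ k, z k - w k = if k = i then 1 else 0 := by
    intro k
    rw [hw k]
    rcases eq_or_ne k i with rfl | hk
    · rw [if_pos rfl, if_pos rfl]; omega
    · rw [if_neg hk, if_neg hk]; omega
  simp only [h]
  simp

lemma sum_sub_two (z w : Fin d → ℕ) (i j : Fin d) (hij : i ≠ j)
    (hi : 1 ≤ z i) (hj : 1 ≤ z j)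
    (hw : ∀ k, w k = if k = j then z j - 1 else if k = i then z i - 1 else z k) :
    ∑ k, (z k - w k) = 2 := by
  have h : ∀ k, z k - w k = (if k = i then 1 else 0) + (if k = j then 1 else 0) := by
    intro k
    rw [hw k]
    rcases eq_or_ne k j with rfl | hkj
    · have hki : k ≠ i := fun h => hij h.symm
      rw [if_pos rfl, if_neg hki, if_pos rfl]; omega
    · rw [if_neg hkj, if_neg hkj]
      rcases eq_or_ne k i with rfl | hki
      · rw [if_pos rfl, if_pos rfl]; omega
      · rw [if_neg hki, if_neg hki]; omega
  simp only [h, Finset.sum_add_distrib]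
  simp

end Aux

/-- Let `U ⊆ ℕ^d` be an upset, `z ∈ U`, `D` the strict downset of `z` in `U`, and `T`
the full subposet of `D` of points at `ℓ¹`-distance at most `2` from `z`. Then the
inclusion `T ↪ D` induces a bijection on connected components: every component of `D`
meets `T`, and elements of `T` connected in `D` are connected in `T`. -/
theorem stmt10 {d : ℕ} (U : Set (Fin d → ℕ))
    (hU : ∀ x ∈ U, ∀ y, x ≤ y → y ∈ U) (z : Fin d → ℕ) (hz : z ∈ U)
    (D T : Set (Fin d → ℕ))
    (hD : D = {y | y ∈ U ∧ y < z})
    (hT : T = {y | y ∈ D ∧ (∑ i, (z i - y i)) ≤ 2}) :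
    (∀ x ∈ D, ∃ t ∈ T, SameComp D t x) ∧
    (∀ a ∈ T, ∀ b ∈ T, SameComp D a b → SameComp T a b) := by
  -- notation: `zm i` is `z - e i`
  set zm : Fin d → (Fin d → ℕ) := fun i => fun k => if k = i then z i - 1 else z k with hzm
  have zma : ∀ i k, zm i k = if k = i then z i - 1 else z k := fun i k => rfl
  have hDmem : ∀ x, x ∈ D ↔ x ∈ U ∧ x < z := by intro x; rw [hD]; rfl
  have hTmem : ∀ x, x ∈ T ↔ (x ∈ U ∧ x < z) ∧ (∑ i, (z i - x i)) ≤ 2 := by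
    intro x; rw [hT]; simp only [Set.mem_setOf_eq, hDmem]
  have hTD : ∀ x, x ∈ T → x ∈ D := by
    intro x hx; rw [hTmem] at hx; rw [hDmem]; exact hx.1
  -- x ≤ z with x i < z i gives x ≤ zm i
  have hle_zm : ∀ (x : Fin d → ℕ) i, x ≤ z → x i < z i → x ≤ zm i := by
    intro x i hxz hxi k
    show x k ≤ zm i k
    rw [zma i k]
    rcases eq_or_ne k i with rfl | hk
    · rw [if_pos rfl]; omega
    · rw [if_neg hk]; exact hxz k
  have hzm_lt : ∀ i, 0 < z i → zm i < z := by
    intro i hi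
    rw [Pi.lt_def]
    constructor
    · intro k
      show zm i k ≤ z k
      rw [zma i k]
      rcases eq_or_ne k i with rfl | hk
      · rw [if_pos rfl]; omega
      · rw [if_neg hk]
    · refine ⟨i, ?_⟩
      show zm i i < z i
      rw [zma i i, if_pos rfl]; omega
  have hzmT : ∀ (x : Fin d → ℕ) i, x ∈ U → x ≤ z → x i < z i → zm i ∈ T := by
    intro x i hxU hxz hxi
    rw [hTmem]
    refine ⟨⟨hU x hxU _ (hle_zm x i hxz hxi), hzm_lt i (by omega)⟩, ?_⟩
    rw [sum_sub_one z (zm i) i (by omega) (zma i)]; omega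
  -- connecting zm i and zm j through the meet, when x witnesses both coords
  have connA : ∀ (x : Fin d → ℕ) i j, x ∈ U → x ≤ z → x i < z i → x j < z j →
      Relation.ReflTransGen (StepIn T (· ≤ ·)) (zm i) (zm j) := by
    intro x i j hxU hxz hi hj
    rcases eq_or_ne i j with rfl | hij
    · exact Relation.ReflTransGen.refl
    · set m : Fin d → ℕ := fun k => if k = j then z j - 1 else if k = i then z i - 1 else z k
        with hm
      have hma : ∀ k, m k = if k = j then z j - 1 else if k = i then z i - 1 else z k :=
        fun k => rfl
      have hxm : x ≤ m := by
        intro k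
        show x k ≤ m k
        rw [hma k]
        rcases eq_or_ne k j with rfl | hkj
        · rw [if_pos rfl]; omega
        · rw [if_neg hkj]
          rcases eq_or_ne k i with rfl | hki
          · rw [if_pos rfl]; omega
          · rw [if_neg hki]; exact hxz k
      have hmU : m ∈ U := hU x hxU m hxm
      have hm_le_i : m ≤ zm i := by
        intro k
        show m k ≤ zm i k
        rw [hma k, zma i k]
        rcases eq_or_ne k j with rfl | hkj
        · rw [if_pos rfl, if_neg (fun h => hij h.symm)]; omega
        · rw [if_neg hkj]
      have hm_le_j : m ≤ zm j := by
        intro k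
        show m k ≤ zm j k
        rw [hma k, zma j k]
        rcases eq_or_ne k j with rfl | hkj
        · rw [if_pos rfl, if_pos rfl]
        · rw [if_neg hkj, if_neg hkj]
          rcases eq_or_ne k i with rfl | hki
          · rw [if_pos rfl]; omega
          · rw [if_neg hki]
      have hm_lt : m < z := lt_of_le_of_lt hm_le_i (hzm_lt i (by omega))
      have hmT : m ∈ T := by
        rw [hTmem]
        refine ⟨⟨hmU, hm_lt⟩, ?_⟩
        rw [sum_sub_two z m i j hij (by omega) (by omega) hma]
      have hziT : zm i ∈ T := hzmT x i hxU hxz hi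
      have hzjT : zm j ∈ T := hzmT x j hxU hxz hj
      exact Relation.ReflTransGen.head ⟨hziT, hmT, Or.inr hm_le_i⟩
        (Relation.ReflTransGen.single ⟨hmT, hzjT, Or.inl hm_le_j⟩)
  -- main induction over zigzags in D
  have main : ∀ (x y : Fin d → ℕ), Relation.ReflTransGen (StepIn D (· ≤ ·)) x y →
      x ∈ U → x ≤ z → ∀ i j, x i < z i → y j < z j →
      Relation.ReflTransGen (StepIn T (· ≤ ·)) (zm i) (zm j) := by
    intro x y h
    induction h with
    | refl => intro hxU hxz i j hi hj; exact connA x i j hxU hxz hi hj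
    | @tail b c h' step ih =>
      intro hxU hxz i j hi hj
      obtain ⟨hbD, hcD, hcmp⟩ := step
      rw [hDmem] at hbD hcD
      obtain ⟨hbU, hbz⟩ := hbD
      obtain ⟨hcU, hcz⟩ := hcD
      obtain ⟨hble, k, hk⟩ := Pi.lt_def.mp hbz
      have c1 := ih hxU hxz i k hi hk
      have c2 : Relation.ReflTransGen (StepIn T (· ≤ ·)) (zm k) (zm j) := by
        rcases hcmp with hle | hle
        · exact connA b k j hbU hble hk (lt_of_le_of_lt (hle j) hj)
        · exact connA c k j hcU (le_of_lt hcz) (lt_of_le_of_lt (hle k) hk) hj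
      exact c1.trans c2
  constructor
  · intro x hxD
    have hxD' := (hDmem x).mp hxD
    obtain ⟨hxU, hxz⟩ := hxD'
    obtain ⟨hxle, i, hi⟩ := Pi.lt_def.mp hxz
    have htT : zm i ∈ T := hzmT x i hxU hxle hi
    refine ⟨zm i, htT, hTD _ htT, hxD, ?_⟩
    exact Relation.ReflTransGen.single ⟨hTD _ htT, hxD, Or.inr (hle_zm x i hxle hi)⟩
  · intro a ha b hb hab
    obtain ⟨haD, hbD, hconn⟩ := hab
    have ha' := (hTmem a).mp ha
    have hb' := (hTmem b).mp hb
    obtain ⟨⟨haU, haz⟩, _⟩ := ha'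
    obtain ⟨⟨hbU, hbz⟩, _⟩ := hb'
    obtain ⟨hale, i, hi⟩ := Pi.lt_def.mp haz
    obtain ⟨hble, j, hj⟩ := Pi.lt_def.mp hbz
    have hziT : zm i ∈ T := hzmT a i haU hale hi
    have hzjT : zm j ∈ T := hzmT b j hbU hble hj
    have step1 : StepIn T (· ≤ ·) a (zm i) := ⟨ha, hziT, Or.inl (hle_zm a i hale hi)⟩
    have step2 : StepIn T (· ≤ ·) (zm j) b := ⟨hzjT, hb, Or.inr (hle_zm b j hble hj)⟩
    have mid := main a b hconn haU hale i j hi hj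
    exact ⟨ha, hb, (Relation.ReflTransGen.single step1).trans
      (mid.trans (Relation.ReflTransGen.single step2))⟩
end

section
/- Let U ⊆ ℕ^d be an upset, and let T be the full subposet of U consisting of the minimal elements of U together with all pairwise joins (coordinatewise maxima) of minimal elements. Then for every t ∈ T, the inclusion of the strict downset of t taken in T into the strict downset of t taken in U induces a bijection on connected components. In particular, an element of T has disconnected strict downset in T if and only if it has disconnected strict downset in U. -/
/-!
Every element of the strict downset `D` of `t` in `U` lies above a minimal element of `U`,
which belongs to `T` and is still below `t`; hence every component of `D` meets `T`.
Two minimal elements `m, m'` lying below a common `z ∈ D` are joined inside `T` through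
`m ⊔ m' ≤ z < t`. Replacing each vertex of a zigzag in `D` by a minimal element below it
therefore gives a zigzag in `T`: of two consecutive (comparable) vertices, the larger one
lies above both chosen minimal elements.
-/

open Relation

namespace StepIn

variable {α : Type*} {S D : Set α} {r : α → α → Prop} {x y : α}

instance : Std.Symm (StepIn S r) := ⟨fun _ _ ⟨hx, hy, h⟩ => ⟨hy, hx, h.symm⟩⟩

lemma mono (hSD : S ⊆ D) (h : StepIn S r x y) : StepIn D r x y :=
  ⟨hSD h.1, hSD h.2.1, h.2.2⟩

end StepIn

section Zigzag

variable {α : Type*}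

lemma reflTransGen_stepIn_of_sup_mem [SemilatticeSup α] {S : Set α} {m m' : α}
    (hm : m ∈ S) (hm' : m' ∈ S) (hsup : m ⊔ m' ∈ S) :
    ReflTransGen (StepIn S (· ≤ ·)) m m' :=
  (ReflTransGen.single ⟨hm, hsup, .inl le_sup_left⟩).tail ⟨hsup, hm', .inr le_sup_right⟩

variable [Preorder α] {S D M : Set α}

lemma reflTransGen_stepIn_of_le_of_le (hM : ∀ x ∈ D, ∃ m ∈ M, m ≤ x)
    (hjoin : ∀ m ∈ M, ∀ m' ∈ M, ∀ z ∈ D, m ≤ z → m' ≤ z →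
      ReflTransGen (StepIn S (· ≤ ·)) m m')
    {a b : α} (ha : a ∈ D) (hab : ReflTransGen (StepIn D (· ≤ ·)) a b)
    {m m' : α} (hm : m ∈ M) (hma : m ≤ a) (hm' : m' ∈ M) (hm'b : m' ≤ b) :
    ReflTransGen (StepIn S (· ≤ ·)) m m' := by
  induction hab generalizing m' with
  | refl => exact hjoin m hm m' hm' a ha hma hm'b
  | tail _ hcb ih =>
    obtain ⟨hc, hb, hcb⟩ := hcb
    obtain ⟨mc, hmc, hmcc⟩ := hM _ hc
    refine (ih hmc hmcc).trans ?_
    rcases hcb with hcb | hbc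
    · exact hjoin mc hmc m' hm' _ hb (hmcc.trans hcb) hm'b
    · exact hjoin mc hmc m' hm' _ hc hmcc (hm'b.trans hbc)

lemma exists_sameComp_of_forall_exists_le (hSD : S ⊆ D) (hMS : M ⊆ S)
    (hM : ∀ x ∈ D, ∃ m ∈ M, m ≤ x) :
    ∀ x ∈ D, ∃ s ∈ S, SameComp D s x := by
  intro x hx
  obtain ⟨m, hm, hmx⟩ := hM x hx
  have hmD : m ∈ D := hSD (hMS hm)
  exact ⟨m, hMS hm, hmD, hx, .single ⟨hmD, hx, .inl hmx⟩⟩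

lemma sameComp_of_sameComp_of_subset (hSD : S ⊆ D) (hMS : M ⊆ S)
    (hM : ∀ x ∈ D, ∃ m ∈ M, m ≤ x)
    (hjoin : ∀ m ∈ M, ∀ m' ∈ M, ∀ z ∈ D, m ≤ z → m' ≤ z →
      ReflTransGen (StepIn S (· ≤ ·)) m m') :
    ∀ a ∈ S, ∀ b ∈ S, SameComp D a b → SameComp S a b := by
  intro a ha b hb ⟨haD, _, hab⟩
  obtain ⟨ma, hma, hmaa⟩ := hM a haD
  obtain ⟨mb, hmb, hmbb⟩ := hM b (hSD hb)
  have hmid := reflTransGen_stepIn_of_le_of_le hM hjoin haD hab hma hmaa hmb hmbb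
  refine ⟨ha, hb, ?_⟩
  exact ((ReflTransGen.single ⟨ha, hMS hma, .inr hmaa⟩).trans hmid).tail
    ⟨hMS hmb, hb, .inl hmbb⟩

lemma posetConn_iff_of_components_bijective (hSD : S ⊆ D)
    (hsurj : ∀ x ∈ D, ∃ s ∈ S, SameComp D s x)
    (hinj : ∀ a ∈ S, ∀ b ∈ S, SameComp D a b → SameComp S a b) :
    PosetConn S ↔ PosetConn D := by
  constructor
  · rintro ⟨⟨s, hs⟩, hconn⟩
    refine ⟨⟨s, hSD hs⟩, fun x hx y hy => ?_⟩
    obtain ⟨sx, hsx, -, -, hx⟩ := hsurj x hx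
    obtain ⟨sy, hsy, -, -, hy⟩ := hsurj y hy
    have hS : ReflTransGen (StepIn D (· ≤ ·)) sx sy :=
      ReflTransGen.mono (fun _ _ => StepIn.mono hSD) _ _ (hconn sx hsx sy hsy)
    exact ((Std.Symm.symm _ _ hx).trans hS).trans hy
  · rintro ⟨⟨x, hx⟩, hconn⟩
    obtain ⟨s, hs, -⟩ := hsurj x hx
    exact ⟨⟨s, hs⟩, fun a ha b hb =>
      (hinj a ha b hb ⟨hSD ha, hSD hb, hconn a (hSD ha) b (hSD hb)⟩).2.2⟩

end Zigzag

lemma exists_le_of_mem_of_wellFoundedLT {α : Type*} [Preorder α] [WellFoundedLT α]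
    {U : Set α} {x : α} (hx : x ∈ U) :
    ∃ m, (m ∈ U ∧ ∀ u ∈ U, ¬ u < m) ∧ m ≤ x := by
  obtain ⟨m, hmx, hm⟩ := exists_minimal_le_of_wellFoundedLT (· ∈ U) x hx
  obtain ⟨hmU, hmin⟩ := minimal_iff_forall_lt.mp hm
  exact ⟨m, ⟨hmU, fun u hu hum => hmin hum hu⟩, hmx⟩

/-- Let `U ⊆ ℕ^d` be an upset and `T` the full subposet of `U` consisting of the
minimal elements of `U` together with all pairwise joins (coordinatewise maxima) of
minimal elements. Then for every `t ∈ T`, the inclusion of the strict downset of `t`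
in `T` into the strict downset of `t` in `U` induces a bijection on connected
components; in particular the former is disconnected iff the latter is. -/
theorem stmt11 {d : ℕ} (U : Set (Fin d → ℕ))
    (hU : ∀ x ∈ U, ∀ y, x ≤ y → y ∈ U)
    (T : Set (Fin d → ℕ))
    (hT : T = {x | ∃ m m', (m ∈ U ∧ ∀ u ∈ U, ¬ u < m) ∧ (m' ∈ U ∧ ∀ u ∈ U, ¬ u < m') ∧
      x = m ⊔ m'}) :
    ∀ t ∈ T,
      (∀ x ∈ {p | p ∈ U ∧ p < t}, ∃ s ∈ {p | p ∈ T ∧ p < t},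
        SameComp {p | p ∈ U ∧ p < t} s x) ∧
      (∀ a ∈ {p | p ∈ T ∧ p < t}, ∀ b ∈ {p | p ∈ T ∧ p < t},
        SameComp {p | p ∈ U ∧ p < t} a b → SameComp {p | p ∈ T ∧ p < t} a b) ∧
      (¬ PosetConn {p | p ∈ T ∧ p < t} ↔ ¬ PosetConn {p | p ∈ U ∧ p < t}) := by
  intro t _
  set D := {p | p ∈ U ∧ p < t}
  set S := {p | p ∈ T ∧ p < t}
  set M := {m | (m ∈ U ∧ ∀ u ∈ U, ¬ u < m) ∧ m < t}
  have hSD : S ⊆ D := by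
    rintro _ ⟨hpT, hlt⟩
    rw [hT] at hpT
    obtain ⟨m, _, hm, _, rfl⟩ := hpT
    exact ⟨hU m hm.1 _ le_sup_left, hlt⟩
  have hMS : M ⊆ S := fun m ⟨hm, hlt⟩ => ⟨hT ▸ ⟨m, m, hm, hm, (sup_idem m).symm⟩, hlt⟩
  have hM : ∀ x ∈ D, ∃ m ∈ M, m ≤ x := fun x ⟨hxU, hxt⟩ =>
    let ⟨m, hm, hmx⟩ := exists_le_of_mem_of_wellFoundedLT hxU
    ⟨m, ⟨hm, hmx.trans_lt hxt⟩, hmx⟩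
  have hjoin : ∀ m ∈ M, ∀ m' ∈ M, ∀ z ∈ D, m ≤ z → m' ≤ z →
      ReflTransGen (StepIn S (· ≤ ·)) m m' :=
    fun m hm m' hm' z hz hmz hm'z => reflTransGen_stepIn_of_sup_mem (hMS hm) (hMS hm')
      ⟨hT ▸ ⟨m, m', hm.1, hm'.1, rfl⟩, (sup_le hmz hm'z).trans_lt hz.2⟩
  have hsurj := exists_sameComp_of_forall_exists_le hSD hMS hM
  have hinj := sameComp_of_sameComp_of_subset hSD hMS hM hjoin
  exact ⟨hsurj, hinj, not_congr (posetConn_iff_of_components_bijective hSD hsurj hinj)⟩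
end

section
/- Let Q ⊆ ℕ^d be an interval with n minimal elements and let P ⊆ Q be an initial scaffold of Q. Then the number of non-identity relations of P is at most d times the number of elements of P; i.e., |hom P| ≤ (d+1)·|Ob P|, counting identities. -/
/-- `m` is a minimum of the subposet `Q`. -/
def IsMinIn {α : Type*} [PartialOrder α] (Q : Set α) (m : α) : Prop :=
  m ∈ Q ∧ ∀ x ∈ Q, ¬ x < m

/-- The strict downset of `q` taken in the subposet `Q`. -/
def strictDown {α : Type*} [PartialOrder α] (Q : Set α) (q : α) : Set α :=
  {p | p ∈ Q ∧ p < q}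

/-- An initial scaffold of the subposet `Q`: a subposet `(P, r)` whose elements are
exactly the elements of `Q` with disconnected strict downset in `Q`, and whose
non-identity relations `r` consist, for each such `b` and each connected component of
the strict downset of `b` in `Q`, of exactly one relation `m < b` with `m` a minimum
of `Q` in that component. -/
def IsScaffoldIn {α : Type*} [PartialOrder α] (Q P : Set α) (r : α → α → Prop) : Prop :=
  P = {q | q ∈ Q ∧ ¬ PosetConn (strictDown Q q)} ∧
  (∀ a b, r a b → IsMinIn Q a ∧ a < b ∧ b ∈ P) ∧
  (∀ b ∈ P, ∀ x ∈ strictDown Q b, ∃! m, r m b ∧ SameComp (strictDown Q b) m x)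

/-- A subset of a poset is an interval if it is connected and convex. -/
def IsIntervalSet {α : Type*} [PartialOrder α] (Q : Set α) : Prop :=
  PosetConn Q ∧ ∀ p r, p ∈ Q → r ∈ Q → ∀ x, p ≤ x → x ≤ r → x ∈ Q

/-!
Every connected component of the strict downset of `b` in an interval `Q ⊆ ℕ^d` contains some
`b - e_i`: if `m < b` with `m i < b i`, then `m ≤ b - e_i < b`, and `b - e_i ∈ Q` by convexity.
Hence a relation `m < b` of an initial scaffold is determined by `b` and a coordinate `i` with
`m i < b i`, which injects the relations into `Fin d × P`. As `ncard` is `0` on infinite sets,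
`P` must also be finite when the relations are: the minima of `Q` form an antichain of `ℕ^d`
(Dickson's lemma), and every other element of `P` is the target of a relation.
-/

lemma IsIntervalSet.ordConnected {α : Type*} [PartialOrder α] {Q : Set α}
    (hQ : IsIntervalSet Q) : Q.OrdConnected :=
  ⟨fun p hp r hr _ hx => hQ.2 p r hp hr _ hx.1 hx.2⟩

lemma sameComp_of_le {α : Type*} [LE α] {S : Set α} {a b : α} (ha : a ∈ S) (hb : b ∈ S)
    (hab : a ≤ b) : SameComp S a b :=
  ⟨ha, hb, .single ⟨ha, hb, Or.inl hab⟩⟩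

section SubSingle

variable {ι : Type*} [DecidableEq ι] {m b : ι → ℕ} {i : ι}

lemma le_sub_single_one (hmb : m ≤ b) (hi : m i < b i) : m ≤ b - Pi.single i 1 := by
  intro j
  rcases eq_or_ne j i with rfl | hj
  · simp only [Pi.sub_apply, Pi.single_eq_same]
    omega
  · simpa [Pi.single_eq_of_ne hj] using hmb j

lemma sub_single_one_lt (hi : b i ≠ 0) : b - Pi.single i 1 < b := by
  refine Pi.lt_def.2 ⟨tsub_le_self, i, ?_⟩
  simp only [Pi.sub_apply, Pi.single_eq_same]
  omega

lemma sameComp_strictDown_sub_single_one {Q : Set (ι → ℕ)} (hQ : Q.OrdConnected) (hb : b ∈ Q)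
    (hm : m ∈ strictDown Q b) (hi : m i < b i) :
    SameComp (strictDown Q b) m (b - Pi.single i 1) := by
  have hle : m ≤ b - Pi.single i 1 := le_sub_single_one hm.2.le hi
  have hlt : b - Pi.single i 1 < b := sub_single_one_lt (by omega)
  exact sameComp_of_le hm ⟨hQ.out hm.1 hb ⟨hle, hlt.le⟩, hlt⟩ hle

end SubSingle

namespace IsScaffoldIn

section PartialOrder

variable {α : Type*} [PartialOrder α] {Q P : Set α} {r : α → α → Prop}

lemma mem_of_mem (hP : IsScaffoldIn Q P r) {q : α} (hq : q ∈ P) : q ∈ Q := by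
  rw [hP.1] at hq
  exact hq.1

lemma mem_of_rel (hP : IsScaffoldIn Q P r) {m b : α} (h : r m b) : b ∈ P :=
  (hP.2.1 m b h).2.2

lemma lt_of_rel (hP : IsScaffoldIn Q P r) {m b : α} (h : r m b) : m < b :=
  (hP.2.1 m b h).2.1

lemma mem_strictDown_of_rel (hP : IsScaffoldIn Q P r) {m b : α} (h : r m b) :
    m ∈ strictDown Q b :=
  ⟨(hP.2.1 m b h).1.1, hP.lt_of_rel h⟩

lemma finite [WellQuasiOrderedLE α] (hP : IsScaffoldIn Q P r)
    (hr : {p : α × α | r p.1 p.2}.Finite) : P.Finite := by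
  have hmin : {q | Minimal (· ∈ Q) q}.Finite :=
    WellQuasiOrderedLE.finite_of_isAntichain (setOfPred_minimal_antichain _)
  refine (hmin.union (hr.image Prod.snd)).subset fun q hq => ?_
  by_cases h : (strictDown Q q).Nonempty
  · obtain ⟨x, hx⟩ := h
    obtain ⟨m, ⟨hm, -⟩, -⟩ := hP.2.2 q hq x hx
    exact Or.inr ⟨(m, q), hm, rfl⟩
  · exact Or.inl (minimal_iff_forall_lt.2 ⟨hP.mem_of_mem hq, fun y hy hyQ => h ⟨y, hyQ, hy⟩⟩)

end PartialOrder

lemma eq_of_rel_of_apply_lt {ι : Type*} [DecidableEq ι] {Q P : Set (ι → ℕ)}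
    {r : (ι → ℕ) → (ι → ℕ) → Prop} (hQ : Q.OrdConnected) (hP : IsScaffoldIn Q P r)
    {m m' b : ι → ℕ} {i : ι} (hm : r m b) (hm' : r m' b) (hi : m i < b i) (hi' : m' i < b i) :
    m = m' := by
  have hcomp : ∀ {m₀}, r m₀ b → m₀ i < b i →
      r m₀ b ∧ SameComp (strictDown Q b) m₀ (b - Pi.single i 1) := fun hm₀ hi₀ =>
    ⟨hm₀, sameComp_strictDown_sub_single_one hQ (hP.mem_of_mem (hP.mem_of_rel hm₀))
      (hP.mem_strictDown_of_rel hm₀) hi₀⟩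
  exact (hP.2.2 b (hP.mem_of_rel hm) _ (hcomp hm hi).2.2.1).unique (hcomp hm hi) (hcomp hm' hi')

end IsScaffoldIn

/-- For an interval `Q ⊆ ℕ^d` and an initial scaffold `(P, r)` of `Q`, the number of
non-identity relations of `P` is at most `d` times the number of elements of `P`. -/
theorem stmt12 {d : ℕ} (Q : Set (Fin d → ℕ)) (hQ : IsIntervalSet Q)
    (P : Set (Fin d → ℕ)) (r : (Fin d → ℕ) → (Fin d → ℕ) → Prop)
    (hP : IsScaffoldIn Q P r) :
    {p : (Fin d → ℕ) × (Fin d → ℕ) | r p.1 p.2}.ncard ≤ d * P.ncard := by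
  set R := {p : (Fin d → ℕ) × (Fin d → ℕ) | r p.1 p.2}
  rcases R.finite_or_infinite with hR | hR
  swap
  · simp [hR.ncard]
  have : Finite P := hP.finite hR
  have hcoord : ∀ p : R, ∃ i, p.1.1 i < p.1.2 i := fun p => (Pi.lt_def.1 (hP.lt_of_rel p.2)).2
  choose i hi using hcoord
  let f : R → Fin d × P := fun p => (i p, ⟨p.1.2, hP.mem_of_rel p.2⟩)
  have hf : f.Injective := by
    rintro ⟨⟨m, b⟩, hm⟩ ⟨⟨m', b'⟩, hm'⟩ h
    simp only [f, Prod.mk.injEq, Subtype.mk.injEq] at h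
    obtain ⟨hi_eq, rfl⟩ := h
    have hm_i := hi ⟨_, hm⟩
    have hm'_i := hi ⟨_, hm'⟩
    rw [hi_eq] at hm_i
    simp only [Subtype.mk.injEq, Prod.mk.injEq, and_true]
    exact hP.eq_of_rel_of_apply_lt hQ.ordConnected hm hm' hm_i hm'_i
  calc R.ncard = Nat.card R := (Nat.card_coe_set_eq R).symm
    _ ≤ Nat.card (Fin d × P) := Nat.card_le_card_of_injective f hf
    _ = d * P.ncard := by rw [Nat.card_prod, Nat.card_eq_fintype_card, Fintype.card_fin,
      Nat.card_coe_set_eq]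
end

section
/- Let Q ⊆ ℕ² be an interval with minimal elements m₁, …, m_k listed in increasing order of first coordinate (equivalently, decreasing order of second coordinate). Then the set of elements of Q with disconnected strict downset is exactly {m₁,…,m_k} ∪ {m_i ∨ m_{i+1} : 1 ≤ i ≤ k−1}, where ∨ is the coordinatewise maximum. -/
open Relation

theorem Relation.ReflTransGen.of_forall_imp {α : Type*} {r : α → α → Prop} {P : α → Prop}
    {a b : α} (h : ReflTransGen r a b) (hP : ∀ x y, r x y → P x → P y) (ha : P a) : P b := by
  induction h with
  | refl => exact ha
  | tail _ hxy ih => exact hP _ _ hxy ih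

theorem Fin.reflTransGen_of_succ {α : Type*} {r : α → α → Prop} {k : ℕ} {f : Fin k → α}
    {a b : Fin k} (hab : a ≤ b)
    (h : ∀ i j : Fin k, a ≤ i → (j : ℕ) = i + 1 → j ≤ b → ReflTransGen r (f i) (f j)) :
    ReflTransGen r (f a) (f b) := by
  suffices ∀ n (c : Fin k), (c : ℕ) = a + n → c ≤ b → ReflTransGen r (f a) (f c) from
    this (b - a) b (by rw [Fin.le_def] at hab; omega) le_rfl
  intro n
  induction n with
  | zero =>
    intro c hc _
    rw [show c = a from Fin.ext hc]
  | succ n ih =>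
    intro c hc hcb
    have hc' : (a : ℕ) + n < k := by omega
    refine (ih ⟨a + n, hc'⟩ rfl (Fin.le_def.mpr ?_)).trans (h _ c ?_ hc hcb) <;>
      simp only [Fin.le_def] at hcb ⊢ <;> omega

instance {α : Type*} {S : Set α} {r : α → α → Prop} : Std.Symm (StepIn S r) :=
  ⟨fun _ _ ⟨hx, hy, hxy⟩ => ⟨hy, hx, hxy.symm⟩⟩

/-- `m` lists the minimal elements of `Q` in increasing order of first coordinate. -/
structure IsOrderedMinimals {k : ℕ} (Q : Set (ℕ × ℕ)) (m : Fin k → ℕ × ℕ) : Prop where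
  mem : ∀ i, m i ∈ Q
  not_lt : ∀ i, ∀ x ∈ Q, ¬ x < m i
  exists_eq : ∀ x ∈ Q, (∀ y ∈ Q, ¬ y < x) → ∃ i, x = m i
  strictMono_fst : StrictMono fun i => (m i).1

namespace IsOrderedMinimals

variable {k : ℕ} {Q : Set (ℕ × ℕ)} {m : Fin k → ℕ × ℕ}

theorem exists_le (hm : IsOrderedMinimals Q m) {p : ℕ × ℕ} (hp : p ∈ Q) : ∃ i, m i ≤ p := by
  obtain ⟨b, hbp, hb⟩ := exists_minimal_le_of_wellFoundedLT (· ∈ Q) p hp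
  obtain ⟨i, rfl⟩ := hm.exists_eq b hb.prop fun y hy => hb.not_lt hy
  exact ⟨i, hbp⟩

theorem eq_of_le (hm : IsOrderedMinimals Q m) {i j : Fin k} (h : m i ≤ m j) : i = j :=
  hm.strictMono_fst.injective <| congrArg Prod.fst <| h.eq_of_not_lt (hm.not_lt j _ (hm.mem i))

theorem strictAnti_snd (hm : IsOrderedMinimals Q m) : StrictAnti fun i => (m i).2 := by
  intro i j hij
  by_contra! h
  exact hij.ne (hm.eq_of_le ⟨(hm.strictMono_fst hij).le, h⟩)

theorem le_of_le_of_le (hm : IsOrderedMinimals Q m) {a b c : Fin k} {x : ℕ × ℕ}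
    (hac : a ≤ c) (hcb : c ≤ b) (ha : m a ≤ x) (hb : m b ≤ x) : m c ≤ x :=
  ⟨(hm.strictMono_fst.monotone hcb).trans hb.1, (hm.strictAnti_snd.antitone hac).trans ha.2⟩

theorem le_and_le_of_le_sup (hm : IsOrderedMinimals Q m) {i j c : Fin k} (hij : i ≤ j)
    (h : m c ≤ m i ⊔ m j) : i ≤ c ∧ c ≤ j := by
  have h1 : (m i ⊔ m j).1 = (m j).1 := sup_eq_right.mpr (hm.strictMono_fst.monotone hij)
  have h2 : (m i ⊔ m j).2 = (m i).2 := sup_eq_left.mpr (hm.strictAnti_snd.antitone hij)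
  exact ⟨hm.strictAnti_snd.le_iff_ge.mp (h.2.trans_eq h2),
    hm.strictMono_fst.le_iff_le.mp (h.1.trans_eq h1)⟩

theorem sup_mem (hm : IsOrderedMinimals Q m) (hQ : IsIntervalSet Q) {i j : Fin k}
    (hij : (j : ℕ) = i + 1) : m i ⊔ m j ∈ Q := by
  by_contra hsup
  have hij' : i < j := Fin.lt_def.mpr (by omega)
  have hstable : ∀ x y, StepIn Q (· ≤ ·) x y →
      (∀ c, m c ≤ x → c ≤ i) → ∀ c, m c ≤ y → c ≤ i := by
    rintro x y ⟨hx, hy, hxy | hyx⟩ hxi c hc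
    · by_contra! hic
      have hjc : j ≤ c := Fin.le_def.mpr (by rw [Fin.lt_def] at hic; omega)
      obtain ⟨a, ha⟩ := hm.exists_le hx
      have hai := hxi a ha
      have hmi := hm.le_of_le_of_le hai hic.le (ha.trans hxy) hc
      have hmj := hm.le_of_le_of_le (hai.trans hij'.le) hjc (ha.trans hxy) hc
      exact hsup (hQ.2 _ _ (hm.mem i) hy _ le_sup_left (sup_le hmi hmj))
    · exact hxi c (hc.trans hyx)
  have hpath := hQ.1.2 _ (hm.mem i) _ (hm.mem j)
  exact hij'.not_ge (hpath.of_forall_imp hstable (fun c hc => (hm.eq_of_le hc).le) j le_rfl)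

theorem not_posetConn_downset (hm : IsOrderedMinimals Q m) (i : Fin k) :
    ¬ PosetConn {p | p ∈ Q ∧ p < m i} :=
  fun ⟨⟨p, hp, hlt⟩, _⟩ => hm.not_lt i p hp hlt

theorem not_posetConn_downset_sup (hm : IsOrderedMinimals Q m) {i j : Fin k}
    (hij : (j : ℕ) = i + 1) : ¬ PosetConn {p | p ∈ Q ∧ p < m i ⊔ m j} := by
  rintro ⟨-, hconn⟩
  have hij' : i < j := Fin.lt_def.mpr (by omega)
  have hi : m i < m i ⊔ m j := left_lt_sup.mpr fun h => hij'.ne' (hm.eq_of_le h)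
  have hj : m j < m i ⊔ m j := right_lt_sup.mpr fun h => hij'.ne (hm.eq_of_le h)
  -- a point of the downset lies above `m i` or `m j`, never above both
  have hstable : ∀ x y, StepIn {p | p ∈ Q ∧ p < m i ⊔ m j} (· ≤ ·) x y → m i ≤ x → m i ≤ y := by
    rintro x y ⟨hx, ⟨hyQ, hy⟩, hxy | hyx⟩ hix
    · exact hix.trans hxy
    · obtain ⟨c, hc⟩ := hm.exists_le hyQ
      obtain ⟨hic, hcj⟩ := hm.le_and_le_of_le_sup hij'.le (hc.trans hy.le)
      obtain rfl | rfl : c = i ∨ c = j := by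
        rw [Fin.le_def] at hic hcj
        omega
      · exact hc
      · exact absurd (sup_le hix (hc.trans hyx)) hx.2.not_ge
  have hpath := hconn _ ⟨hm.mem i, hi⟩ _ ⟨hm.mem j, hj⟩
  exact hij'.ne (hm.eq_of_le (hpath.of_forall_imp hstable le_rfl))

theorem posetConn_downset (hm : IsOrderedMinimals Q m) (hQ : IsIntervalSet Q) {q : ℕ × ℕ}
    (hq : q ∈ Q) (hne : ∀ i, m i ≠ q) (hsup_ne : ∀ i j : Fin k, (j : ℕ) = i + 1 → m i ⊔ m j ≠ q) :
    PosetConn {p | p ∈ Q ∧ p < q} := by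
  set D := {p | p ∈ Q ∧ p < q}
  have hmD : ∀ c, m c ≤ q → m c ∈ D := fun c hc => ⟨hm.mem c, hc.lt_of_ne (hne c)⟩
  have hchain : ∀ c d, c ≤ d → m c ≤ q → m d ≤ q →
      ReflTransGen (StepIn D (· ≤ ·)) (m c) (m d) := by
    intro c d hcd hc hd
    refine Fin.reflTransGen_of_succ hcd fun i j hci hij hjd => ?_
    have hij' : i ≤ j := Fin.le_def.mpr (by omega)
    have hi := hm.le_of_le_of_le hci (hij'.trans hjd) hc hd
    have hj := hm.le_of_le_of_le (hci.trans hij') hjd hc hd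
    have hs : m i ⊔ m j ∈ D := ⟨hm.sup_mem hQ hij, (sup_le hi hj).lt_of_ne (hsup_ne i j hij)⟩
    exact .tail (.single ⟨hmD i hi, hs, .inl le_sup_left⟩) ⟨hs, hmD j hj, .inr le_sup_right⟩
  obtain ⟨c₀, hc₀⟩ := hm.exists_le hq
  refine ⟨⟨m c₀, hmD c₀ hc₀⟩, fun a ha b hb => ?_⟩
  obtain ⟨c, hc⟩ := hm.exists_le ha.1
  obtain ⟨d, hd⟩ := hm.exists_le hb.1
  have hcq := hc.trans ha.2.le
  have hdq := hd.trans hb.2.le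
  have hcd : ReflTransGen (StepIn D (· ≤ ·)) (m c) (m d) := by
    rcases le_total c d with h | h
    · exact hchain c d h hcq hdq
    · exact Std.Symm.symm _ _ (hchain d c h hdq hcq)
  exact (ReflTransGen.single ⟨ha, hmD c hcq, .inr hc⟩).trans (hcd.tail ⟨hmD d hdq, hb, .inl hd⟩)

end IsOrderedMinimals

/-- Let `Q ⊆ ℕ²` be an interval whose minimal elements are `m 0, …, m (k-1)`, listed in
increasing order of first coordinate.  Then the elements of `Q` with disconnected
strict downset are exactly the minimal elements together with the joins
`m i ⊔ m (i+1)` of consecutive minimal elements. -/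
theorem stmt13 {k : ℕ} (Q : Set (ℕ × ℕ)) (hQ : IsIntervalSet Q)
    (m : Fin k → ℕ × ℕ)
    (hmin : ∀ i, m i ∈ Q ∧ ∀ x ∈ Q, ¬ x < m i)
    (hall : ∀ x ∈ Q, (∀ y ∈ Q, ¬ y < x) → ∃ i, x = m i)
    (hord : StrictMono fun i => (m i).1) :
    {q | q ∈ Q ∧ ¬ PosetConn {p | p ∈ Q ∧ p < q}} =
      Set.range m ∪
        {x | ∃ (i : Fin k) (h : (i : ℕ) + 1 < k), x = m i ⊔ m ⟨(i : ℕ) + 1, h⟩} := by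
  have hm : IsOrderedMinimals Q m := ⟨fun i => (hmin i).1, fun i => (hmin i).2, hall, hord⟩
  ext q
  constructor
  · rintro ⟨hq, hdisc⟩
    by_contra hout
    simp only [Set.mem_union, Set.mem_range, Set.mem_ofPred_eq, not_or, not_exists] at hout
    refine hdisc (hm.posetConn_downset hQ hq hout.1 fun i j hij hsup => ?_)
    have hj : j = ⟨i + 1, by omega⟩ := Fin.ext hij
    exact hout.2 i _ (hj ▸ hsup.symm)
  · rintro (⟨i, rfl⟩ | ⟨i, h, rfl⟩)
    · exact ⟨hm.mem i, hm.not_posetConn_downset i⟩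
    · exact ⟨hm.sup_mem hQ (j := ⟨i + 1, h⟩) rfl, hm.not_posetConn_downset_sup (j := ⟨i + 1, h⟩) rfl⟩
end

section
/- Let Q be a poset in which every downset is finite, let M be the set of minima of Q, and let G : Q → Vec be a functor to vector spaces. Then lim G is isomorphic to the space of presections {v ∈ ∏_{m∈M} G_m : for all l, m ∈ M and q ∈ Q with l ≤ q and m ≤ q, G_{lq}(v_l) = G_{mq}(v_m)}, where the cone map to G_q is v ↦ G_{lq}(v_l) for any choice of l ∈ M with l ≤ q (this is well-defined). -/
/-!
A compatible family over all of `Q` is determined by its values at the minima: every `q` lies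
above some minimum `l`, its value at `q` is `G_{lq}` of its value at `l`, and the presection
condition makes this independent of `l`. So presections, with these cone maps, form a limit cone
of `G`, and the isomorphism is the comparison of two limit cones.
-/

open CategoryTheory CategoryTheory.Limits

/-- The space of presections of a functor `G : Q ⥤ Vec`: families `v` indexed by the
minima of `Q` such that `G_{lq}(v l) = G_{mq}(v m)` whenever minima `l, m` both lie
below `q`. -/
def preSec {K : Type} [Field K] {Q : Type} [PartialOrder Q] (G : Q ⥤ ModuleCat.{0} K) :
    Submodule K (∀ m : {m : Q // IsMin m}, G.obj m.1) where
  carrier := {v | ∀ (l m : {m : Q // IsMin m}) (q : Q) (hl : l.1 ≤ q) (hm : m.1 ≤ q),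
    G.map hl.hom (v l) = G.map hm.hom (v m)}
  add_mem' := by
    intro v w hv hw l m q hl hm
    simp only [Pi.add_apply, map_add, hv l m q hl hm, hw l m q hl hm]
  zero_mem' := by
    intro l m q hl hm
    simp
  smul_mem' := by
    intro c v hv l m q hl hm
    simp only [Pi.smul_apply, map_smul, hv l m q hl hm]

theorem exists_isMin_le_of_finite_Iic {Q : Type} [PartialOrder Q] {q : Q}
    (hq : (Set.Iic q).Finite) : ∃ l : {m : Q // IsMin m}, l.1 ≤ q := by
  obtain ⟨a, haq, ha⟩ := hq.exists_minimal ⟨q, le_rfl⟩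
  exact ⟨⟨a, fun b hb => ha (hb.trans haq) hb⟩, haq⟩

namespace preSec

variable {K : Type} [Field K] {Q : Type} [PartialOrder Q]
  (h : ∀ q : Q, ∃ l : {m : Q // IsMin m}, l.1 ≤ q) (G : Q ⥤ ModuleCat.{0} K)

noncomputable def minBelow (q : Q) : {m : Q // IsMin m} := (h q).choose

theorem minBelow_le (q : Q) : (minBelow h q).1 ≤ q := (h q).choose_spec

noncomputable def eval (q : Q) : preSec G →ₗ[K] G.obj q :=
  (G.map (minBelow_le h q).hom).hom ∘ₗ LinearMap.proj (minBelow h q) ∘ₗ (preSec G).subtype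

variable {h G}

theorem eval_apply_of_le {q : Q} (v : preSec G) (l : {m : Q // IsMin m}) (hl : l.1 ≤ q) :
    eval h G q v = G.map hl.hom (v.1 l) :=
  v.2 _ l q _ hl

theorem eval_apply_isMin (v : preSec G) (l : {m : Q // IsMin m}) : eval h G l.1 v = v.1 l := by
  rw [eval_apply_of_le v l le_rfl]
  exact congrArg (fun f => f.hom (v.1 l)) (G.map_id l.1)

variable (h G)

noncomputable def cone : Cone G where
  pt := ModuleCat.of K (preSec G)
  π :=
    { app := fun q => ModuleCat.ofHom (eval h G q)
      naturality := fun p q f => by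
        ext v
        have hpq : (minBelow h p).1 ≤ q := (minBelow_le h p).trans (leOfHom f)
        have hmap : G.map hpq.hom = G.map (minBelow_le h p).hom ≫ G.map f := by
          rw [← G.map_comp]
          rfl
        exact (eval_apply_of_le v _ hpq).trans (ConcreteCategory.congr_hom hmap _) }

noncomputable def isLimitCone : IsLimit (cone h G) where
  lift s := ModuleCat.ofHom <|
    LinearMap.codRestrict (preSec G) (LinearMap.pi fun m => (s.π.app m.1).hom)
      fun x l m q hl hm => (s.w_apply hl.hom x).trans (s.w_apply hm.hom x).symm
  fac s q := by
    ext x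
    exact s.w_apply (minBelow_le h q).hom x
  uniq s φ hφ := by
    ext x
    exact Subtype.ext <| funext fun l =>
      (eval_apply_isMin (h := h) (φ x) l).symm.trans (ConcreteCategory.congr_hom (hφ l.1) x)

end preSec

/-- For a poset `Q` with finite downsets and `G : Q ⥤ Vec`, the limit of `G` is
isomorphic to the space of presections of `G`, compatibly with the cone maps: the cone
map to `G q` is `v ↦ G_{lq}(v l)` for any choice of minimum `l ≤ q`. -/
theorem stmt15 {K : Type} [Field K] {Q : Type} [PartialOrder Q]
    (hfin : ∀ q : Q, (Set.Iic q).Finite) (G : Q ⥤ ModuleCat.{0} K) :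
    ∃ e : ↥(limit G) ≃ₗ[K] ↥(preSec G),
      ∀ (q : Q) (l : {m : Q // IsMin m}) (hl : l.1 ≤ q) (x : ↥(limit G)),
        G.map hl.hom ((e x).1 l) = limit.π G q x := by
  have h : ∀ q : Q, ∃ l : {m : Q // IsMin m}, l.1 ≤ q :=
    fun q => exists_isMin_le_of_finite_Iic (hfin q)
  let e := (limit.isLimit G).conePointUniqueUpToIso (preSec.isLimitCone h G)
  refine ⟨e.toLinearEquiv, fun q l hl x => ?_⟩
  exact (preSec.eval_apply_of_le (e.hom x) l hl).symm.trans <| ConcreteCategory.congr_hom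
    ((limit.isLimit G).conePointUniqueUpToIso_hom_comp (preSec.isLimitCone h G) q) x
end

section
/- Let Q be a poset with finite downsets, suppose the set I_Q of elements with disconnected strict downset is finite, and let F : C → Q be a minimal initial functor (i.e., among all initial functors into Q, C has the minimum number of objects and the minimum number of morphisms). Then F is faithful and injective on objects, and its image is an initial scaffold of Q. -/
/-!
The points of `I_Q`, with one edge `m < q` for each component of the strict downset of each
`q ∈ I_Q` (starting at a chosen minimum `m` of that component), form an initial scaffold `S`
of `Q` whose inclusion is initial; this is proved by well-founded induction on `q`.

Conversely, every initial functor `F : C ⥤ Q` hits every point of `I_Q`, and for every edge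
`(m, q)` of `S` some morphism of `C` goes from the component of `m` into the fibre over `q`.
Such morphisms are pairwise distinct non-identities, so `|C| ≥ |I_Q|` and
`|hom C| ≥ |C| + #edges = |hom S|`. Minimality forces equality throughout: `F` is a bijection
onto `I_Q`, and every non-identity morphism of `C` is the chosen one for exactly one edge.
Faithfulness and the shape of the image can be read off from this.
-/

open CategoryTheory

namespace InitialScaffold

lemma injective_and_range_eq_of_subset_range {α β : Type*} {f : α → β} {S : Set β} [Finite S]
    (hsub : S ⊆ Set.range f) (e : α ↪ S) : Function.Injective f ∧ Set.range f = S := by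
  choose j hj using fun s : S => hsub s.2
  have hj_inj : Function.Injective j := fun s t h => Subtype.ext (by rw [← hj s, ← hj t, h])
  have : Finite α := Finite.of_injective e e.injective
  have hj_surj : Function.Surjective j :=
    (hj_inj.bijective_of_nat_card_le (Nat.card_le_card_of_injective e e.injective)).2
  refine ⟨fun c c' h => ?_, subset_antisymm ?_ hsub⟩
  · obtain ⟨s, rfl⟩ := hj_surj c
    obtain ⟨t, rfl⟩ := hj_surj c'
    rw [hj, hj] at h
    rw [Subtype.ext h]
  · rintro _ ⟨c, rfl⟩
    obtain ⟨s, rfl⟩ := hj_surj c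
    rw [hj]
    exact s.2

variable {Q : Type*} [PartialOrder Q]

lemma wellFoundedLT_of_finite_Iic (hfin : ∀ q : Q, (Set.Iic q).Finite) : WellFoundedLT Q :=
  ⟨Subrelation.wf (fun {_ y} hxy => Set.ncard_lt_ncard (Set.Iic_ssubset_Iic.mpr hxy) (hfin y))
    (measure fun q => (Set.Iic q).ncard).wf⟩

instance {S : Set Q} : Std.Symm (StepIn S (· ≤ ·)) where
  symm _ _ h := ⟨h.2.1, h.1, h.2.2.symm⟩

lemma SameComp.symm {S : Set Q} {a b : Q} (h : SameComp S a b) : SameComp S b a :=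
  ⟨h.2.1, h.1, Std.Symm.symm _ _ h.2.2⟩

lemma SameComp.trans {S : Set Q} {a b c : Q} (hab : SameComp S a b) (hbc : SameComp S b c) :
    SameComp S a c :=
  ⟨hab.1, hbc.2.1, hab.2.2.trans hbc.2.2⟩

lemma SameComp.of_le {q a b : Q} (ha : a < q) (hb : b < q) (h : a ≤ b) :
    SameComp (Set.Iio q) a b :=
  ⟨ha, hb, .single ⟨ha, hb, .inl h⟩⟩

lemma posetConn_of_forall_sameComp {S : Set Q} {x : Q} (hx : x ∈ S)
    (h : ∀ a ∈ S, SameComp S x a) : PosetConn S :=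
  ⟨⟨x, hx⟩, fun a ha b hb => (SameComp.trans (SameComp.symm (h a ha)) (h b hb)).2.2⟩

variable (Q) in
def disconnectedPoints : Set Q := {q | ¬ PosetConn (Set.Iio q)}

lemma IsMin.mem_disconnectedPoints {m : Q} (hm : IsMin m) : m ∈ disconnectedPoints Q :=
  fun ⟨⟨_, hy⟩, _⟩ => hm.not_lt hy

/-- The connected component of `x` in the strict downset of `q` (empty unless `x < q`). -/
def lowerComp (q x : Q) : Set Q := {y | SameComp (Set.Iio q) y x}

lemma self_mem_lowerComp {q x : Q} (hx : x < q) : x ∈ lowerComp q x :=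
  ⟨hx, hx, .refl⟩

lemma lowerComp_eq {q x y : Q} (hy : y ∈ lowerComp q x) : lowerComp q y = lowerComp q x :=
  Set.ext fun _ =>
    ⟨fun hz => SameComp.trans hz hy, fun hz => SameComp.trans hz (SameComp.symm hy)⟩

lemma mem_lowerComp_of_le {q x y z : Q} (hy : y ∈ lowerComp q x) (hzy : z ≤ y) :
    z ∈ lowerComp q x :=
  SameComp.trans (SameComp.of_le (hzy.trans_lt hy.1) hy.1 hzy) hy

section WellFounded

variable [WellFoundedLT Q]

open scoped Classical in
/-- A chosen minimal element of `lowerComp q x` (junk value `x` unless `x < q`). -/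
noncomputable def compMin (q x : Q) : Q :=
  if hx : x < q then wellFounded_lt.min (lowerComp q x) ⟨x, self_mem_lowerComp hx⟩ else x

variable {q x : Q}

lemma compMin_mem (hx : x < q) : compMin q x ∈ lowerComp q x := by
  rw [compMin, dif_pos hx]
  exact WellFounded.min_mem _ _ _

lemma compMin_lt (hx : x < q) : compMin q x < q := (compMin_mem hx).1

lemma isMin_compMin (hx : x < q) : IsMin (compMin q x) := by
  intro z hz
  by_contra hzm
  have hmem : z ∈ lowerComp q x := mem_lowerComp_of_le (compMin_mem hx) hz
  rw [compMin, dif_pos hx] at hz hzm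
  exact wellFounded_lt.not_lt_min (lowerComp q x) hmem (lt_of_le_not_ge hz hzm)

lemma compMin_congr {y : Q} (hy : y ∈ lowerComp q x) : compMin q y = compMin q x := by
  have hx : x < q := hy.2.1
  simp only [compMin, dif_pos hx, dif_pos (show y < q from hy.1), lowerComp_eq hy]

def ScaffoldEdge (m q : Q) : Prop := IsMin m ∧ m < q ∧ compMin q m = m

lemma scaffoldEdge_compMin (hx : x < q) : ScaffoldEdge (compMin q x) q :=
  ⟨isMin_compMin hx, compMin_lt hx, compMin_congr (compMin_mem hx)⟩

variable (Q) in
def scaffoldEdges : Set (Q × Q) := {p | p.2 ∈ disconnectedPoints Q ∧ ScaffoldEdge p.1 p.2}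

lemma scaffoldEdges.eq_of_mem_lowerComp {p p' : Q × Q} (hp : p ∈ scaffoldEdges Q)
    (hp' : p' ∈ scaffoldEdges Q) (h : p.2 = p'.2) {y : Q} (hy : y ∈ lowerComp p.2 p.1)
    (hy' : y ∈ lowerComp p'.2 p'.1) : p = p' := by
  obtain ⟨a, q⟩ := p
  obtain ⟨a', q'⟩ := p'
  dsimp only at h hy hy'
  subst h
  have hmin : compMin q a = compMin q a' := (compMin_congr hy).symm.trans (compMin_congr hy')
  rw [hp.2.2.2, hp'.2.2.2] at hmin
  exact Prod.ext hmin rfl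

lemma scaffoldEdges_finite (hfin : ∀ q : Q, (Set.Iic q).Finite)
    (hD : (disconnectedPoints Q).Finite) : (scaffoldEdges Q).Finite :=
  ((hD.biUnion fun q _ => hfin q).prod hD).subset
    fun _ hp => ⟨Set.mem_biUnion hp.1 hp.2.2.1.le, hp.1⟩

end WellFounded

variable (Q) in
/-- The points of `I_Q`; for `[WellFoundedLT Q]` its order below makes it an initial scaffold,
with one edge `m < q` per component of the strict downset of `q`. -/
def Scaffold : Type _ := {q : Q // q ∈ disconnectedPoints Q}

namespace Scaffold

variable [WellFoundedLT Q]

instance : PartialOrder (Scaffold Q) where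
  le a b := a = b ∨ ScaffoldEdge a.1 b.1
  le_refl _ := .inl rfl
  le_trans a b c := by
    rintro (rfl | hab) (rfl | hbc)
    exacts [.inl rfl, .inr hbc, .inr hab, (hbc.1.not_lt hab.2.1).elim]
  le_antisymm a b := by
    rintro (rfl | hab) (hba | hba)
    exacts [rfl, rfl, hba.symm, (hab.2.1.not_gt hba.2.1).elim]

lemma le_iff {a b : Scaffold Q} : a ≤ b ↔ a = b ∨ ScaffoldEdge a.1 b.1 := Iff.rfl

lemma exists_le (x : Q) : ∃ m : Scaffold Q, m.1 ≤ x :=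
  let ⟨m, hmx, hm⟩ := exists_minimal_le_of_wellFoundedLT (fun _ => True) x trivial
  ⟨⟨m, IsMin.mem_disconnectedPoints (minimal_true.mp hm)⟩, hmx⟩

variable (Q) in
def incl : Scaffold Q ⥤ Q :=
  Monotone.functor (f := Subtype.val) fun _ _ h => h.elim (fun h => h ▸ le_rfl) (·.2.1.le)

abbrev mkArrow {q : Q} (s : Scaffold Q) (h : s.1 ≤ q) : CostructuredArrow (incl Q) q :=
  CostructuredArrow.mk (Y := s) (homOfLE h)

lemma eq_mkArrow {q : Q} (o : CostructuredArrow (incl Q) q) :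
    o = mkArrow o.left (leOfHom o.hom) :=
  CostructuredArrow.eq_mk o

lemma zigzag_mkArrow_of_le {q : Q} {s t : Scaffold Q} (hst : s ≤ t) (hs : s.1 ≤ q)
    (ht : t.1 ≤ q) : Zigzag (mkArrow s hs) (mkArrow t ht) :=
  .of_hom (CostructuredArrow.homMk (homOfLE hst) (Subsingleton.elim _ _))

lemma zigzag_mkArrow_mono {x q : Q} (hxq : x ≤ q) {s t : Scaffold Q} {hs : s.1 ≤ x}
    {ht : t.1 ≤ x} (h : Zigzag (mkArrow s hs) (mkArrow t ht)) :
    Zigzag (mkArrow s (hs.trans hxq)) (mkArrow t (ht.trans hxq)) :=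
  zigzag_obj_of_zigzag (CostructuredArrow.map (homOfLE hxq)) h

lemma zigzag_mkArrow_of_sameComp {q y z : Q}
    (ih : ∀ x < q, ∀ (s t : Scaffold Q) (hs : s.1 ≤ x) (ht : t.1 ≤ x),
      Zigzag (mkArrow s hs) (mkArrow t ht))
    (hyz : SameComp (Set.Iio q) y z) {s t : Scaffold Q} (hs : s.1 ≤ y) (ht : t.1 ≤ z) :
    Zigzag (mkArrow s (hs.trans hyz.1.le)) (mkArrow t (ht.trans hyz.2.1.le)) := by
  obtain ⟨hy, hz, hpath⟩ := hyz
  induction hpath generalizing t with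
  | refl => exact zigzag_mkArrow_mono hy.le (ih y hy s t hs ht)
  | @tail b c _ hbc ihb =>
    -- a point of `I_Q` below `b` lies below both ends of the step from `b` to `c`
    obtain ⟨m, hmb⟩ := exists_le (Q := Q) b
    refine (ihb hmb hbc.1).trans ?_
    rcases hbc.2.2 with hle | hle
    · exact zigzag_mkArrow_mono hbc.2.1.le (ih c hbc.2.1 m t (hmb.trans hle) ht)
    · exact zigzag_mkArrow_mono hbc.1.le (ih b hbc.1 m t hmb (ht.trans hle))

lemma zigzag_mkArrow (q : Q) (s t : Scaffold Q) (hs : s.1 ≤ q) (ht : t.1 ≤ q) :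
    Zigzag (mkArrow s hs) (mkArrow t ht) := by
  induction q using WellFoundedLT.induction generalizing s t with | ind q ih => ?_
  by_cases hq : q ∈ disconnectedPoints Q
  · suffices h : ∀ s (hs : s.1 ≤ q), Zigzag (mkArrow s hs) (mkArrow ⟨q, hq⟩ le_rfl) from
      (h s hs).trans (h t ht).symm
    intro s hs
    rcases hs.eq_or_lt with h | h
    · obtain ⟨s, hs'⟩ := s
      dsimp only at h
      subst h
      rfl
    · let m : Scaffold Q := ⟨compMin q s.1, IsMin.mem_disconnectedPoints (isMin_compMin h)⟩
      have hm : m ≤ ⟨q, hq⟩ := .inr (scaffoldEdge_compMin h)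
      exact (zigzag_mkArrow_of_sameComp ih (SameComp.symm (compMin_mem h)) le_rfl
        (le_refl m.1)).trans (zigzag_mkArrow_of_le hm _ _)
  · have hlt {s : Scaffold Q} (hs : s.1 ≤ q) : s.1 < q := hs.lt_of_ne fun h => hq (h ▸ s.2)
    have hconn : PosetConn (Set.Iio q) := not_not.mp hq
    exact zigzag_mkArrow_of_sameComp ih ⟨hlt hs, hlt ht, hconn.2 _ (hlt hs) _ (hlt ht)⟩
      le_rfl le_rfl

theorem incl_initial : (incl Q).Initial where
  out q := by
    obtain ⟨m, hmq⟩ := exists_le q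
    have : Nonempty (CostructuredArrow (incl Q) q) := ⟨mkArrow m hmq⟩
    refine zigzag_isConnected fun o o' => ?_
    rw [eq_mkArrow o, eq_mkArrow o']
    exact zigzag_mkArrow q _ _ _ _

lemma sigma_hom_ext {s t : Σ a b : Scaffold Q, a ⟶ b} (h₁ : s.1 = t.1) (h₂ : s.2.1 = t.2.1) :
    s = t := by
  obtain ⟨a, b, f⟩ := s
  obtain ⟨a', b', f'⟩ := t
  dsimp only at h₁ h₂
  subst h₁ h₂
  rw [Subsingleton.elim f f']

open scoped Classical in
noncomputable def homToSum (s : Σ a b : Scaffold Q, a ⟶ b) : Scaffold Q ⊕ scaffoldEdges Q :=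
  if h : s.1 = s.2.1 then .inl s.1
  else .inr ⟨(s.1.1, s.2.1.1), s.2.1.2, (le_iff.mp (leOfHom s.2.2)).resolve_left h⟩

lemma homToSum_injective : Function.Injective (homToSum (Q := Q)) := by
  intro s t h
  unfold homToSum at h
  split_ifs at h with hs ht ht
  · exact sigma_hom_ext (Sum.inl_injective h) (hs ▸ ht ▸ Sum.inl_injective h)
  · have hst := congrArg Subtype.val (Sum.inr_injective h)
    exact sigma_hom_ext (Subtype.ext (congrArg Prod.fst hst))
      (Subtype.ext (congrArg Prod.snd hst))

end Scaffold

section Initial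

variable {C : Type*} [Category C] (F : C ⥤ Q) [F.Initial]

lemma exists_obj_le (q : Q) : ∃ c, F.obj c ≤ q :=
  let ⟨o⟩ := (Functor.Initial.out (F := F) q).is_nonempty
  ⟨o.left, leOfHom o.hom⟩

lemma disconnectedPoints_subset_range : disconnectedPoints Q ⊆ Set.range F.obj := by
  intro q hq
  by_contra hrange
  have hlt (o : CostructuredArrow F q) : F.obj o.left < q :=
    (leOfHom o.hom).lt_of_ne fun h => hrange ⟨o.left, h⟩
  obtain ⟨c₀, hc₀⟩ := exists_obj_le F q
  let o₀ : CostructuredArrow F q := .mk (homOfLE hc₀)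
  have hinv {o o' : CostructuredArrow F q} (f : o ⟶ o') :
      SameComp (Set.Iio q) (F.obj o₀.left) (F.obj o.left) ↔
        SameComp (Set.Iio q) (F.obj o₀.left) (F.obj o'.left) :=
    have hf := SameComp.of_le (hlt o) (hlt o') (leOfHom (F.map f.left))
    ⟨fun h => SameComp.trans h hf, fun h => SameComp.trans h (SameComp.symm hf)⟩
  have hconn (o : CostructuredArrow F q) :
      SameComp (Set.Iio q) (F.obj o₀.left) (F.obj o.left) :=
    induct_on_objects
      {o : CostructuredArrow F q | SameComp (Set.Iio q) (F.obj o₀.left) (F.obj o.left)}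
      (j₀ := o₀) ⟨hlt o₀, hlt o₀, .refl⟩ hinv o
  refine hq (posetConn_of_forall_sameComp (hlt o₀) fun a ha => ?_)
  obtain ⟨c, hc⟩ := exists_obj_le F a
  let o : CostructuredArrow F q := .mk (homOfLE (hc.trans ha.le))
  exact SameComp.trans (hconn o) (SameComp.of_le (hlt o) ha hc)

lemma exists_hom_to_of_lt {q x : Q} (hq : q ∈ Set.range F.obj) (hx : x < q) :
    ∃ (a b : C) (_ : a ⟶ b), F.obj b = q ∧ F.obj a ∈ lowerComp q x := by
  by_contra! hnone
  -- otherwise, lying over the component of `x` is invariant along morphisms of `F ↓ q`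
  obtain ⟨c, hc⟩ := exists_obj_le F x
  obtain ⟨d, hd⟩ := hq
  have hinv : ∀ {o o' : CostructuredArrow F q} (_ : o ⟶ o'),
      F.obj o.left ∈ lowerComp q x ↔ F.obj o'.left ∈ lowerComp q x := by
    intro o o' f
    have hle := leOfHom (F.map f.left)
    refine ⟨fun h => ?_, fun h => mem_lowerComp_of_le h hle⟩
    have hlt : F.obj o'.left < q := (leOfHom o'.hom).lt_of_ne fun heq => hnone _ _ f.left heq h
    exact SameComp.trans (SameComp.symm (SameComp.of_le h.1 hlt hle)) h
  have hd' := induct_on_objects {o : CostructuredArrow F q | F.obj o.left ∈ lowerComp q x}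
    (j₀ := .mk (homOfLE (hc.trans hx.le)))
    (mem_lowerComp_of_le (self_mem_lowerComp hx) hc) hinv (.mk (homOfLE hd.le))
  exact (hd'.1 : F.obj d < q).ne hd

end Initial

section Realizes

variable {C : Type*} [Category C] {F : C ⥤ Q}

variable (F) in
def Realizes (p : Q × Q) (a b : C) : Prop := F.obj b = p.2 ∧ F.obj a ∈ lowerComp p.2 p.1

lemma Realizes.lt {p : Q × Q} {a b : C} (h : Realizes F p a b) : F.obj a < F.obj b :=
  h.1 ▸ h.2.1

lemma Realizes.ne {p : Q × Q} {a b : C} (h : Realizes F p a b) : a ≠ b :=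
  fun hab => h.lt.ne (hab ▸ rfl)

variable [WellFoundedLT Q]

lemma Realizes.unique {p p' : Q × Q} (hp : p ∈ scaffoldEdges Q) (hp' : p' ∈ scaffoldEdges Q)
    {a b : C} (h : Realizes F p a b) (h' : Realizes F p' a b) : p = p' :=
  scaffoldEdges.eq_of_mem_lowerComp hp hp' (h.1.symm.trans h'.1) h.2 h'.2

variable (F) in
lemma exists_realizes [F.Initial] {p : Q × Q} (hp : p ∈ scaffoldEdges Q) :
    ∃ s : Σ a b : C, a ⟶ b, Realizes F p s.1 s.2.1 :=
  let ⟨a, b, f, h⟩ := exists_hom_to_of_lt F (disconnectedPoints_subset_range F hp.1) hp.2.2.1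
  ⟨⟨a, b, f⟩, h⟩

variable (F) in
def IsRealization (g : scaffoldEdges Q → Σ a b : C, a ⟶ b) : Prop :=
  ∀ p : scaffoldEdges Q, Realizes F p (g p).1 (g p).2.1

def withIds (g : scaffoldEdges Q → Σ a b : C, a ⟶ b) :
    C ⊕ scaffoldEdges Q → Σ a b : C, a ⟶ b :=
  Sum.elim (fun c => ⟨c, c, 𝟙 c⟩) g

variable {g : scaffoldEdges Q → Σ a b : C, a ⟶ b}

lemma IsRealization.realizes_of_eq (hg : IsRealization F g) {p : scaffoldEdges Q} {a b : C}
    {f : a ⟶ b} (h : g p = ⟨a, b, f⟩) : Realizes F p a b := by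
  have hp := hg p
  rw [h] at hp
  exact hp

lemma IsRealization.injective_withIds (hg : IsRealization F g) :
    Function.Injective (withIds g) := by
  rintro (c | p) (c' | p') h <;> simp only [withIds, Sum.elim_inl, Sum.elim_inr] at h
  · exact congrArg Sum.inl (congrArg Sigma.fst h)
  · exact ((hg p').ne ((congrArg Sigma.fst h).symm.trans (congrArg (·.2.1) h))).elim
  · exact ((hg p).ne ((congrArg Sigma.fst h).trans (congrArg (·.2.1) h).symm)).elim
  · exact congrArg Sum.inr (Subtype.ext ((hg p).unique p.2 p'.2 (by rw [h]; exact hg p')))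

lemma IsRealization.surjective_withIds [Finite (Scaffold Q)] [Finite (scaffoldEdges Q)]
    (hg : IsRealization F g) (eobj : C ≃ Scaffold Q)
    (ehom : (Σ a b : C, a ⟶ b) ↪ Σ a b : Scaffold Q, a ⟶ b) :
    Function.Surjective (withIds g) := by
  have : Finite C := .of_equiv _ eobj.symm
  have : Finite (Σ a b : Scaffold Q, a ⟶ b) := .of_injective _ Scaffold.homToSum_injective
  have : Finite (Σ a b : C, a ⟶ b) := .of_injective ehom ehom.injective
  refine (hg.injective_withIds.bijective_of_nat_card_le ?_).2
  calc Nat.card (Σ a b : C, a ⟶ b)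
      ≤ Nat.card (Σ a b : Scaffold Q, a ⟶ b) := Nat.card_le_card_of_injective ehom ehom.injective
    _ ≤ Nat.card (Scaffold Q ⊕ scaffoldEdges Q) :=
      Nat.card_le_card_of_injective _ Scaffold.homToSum_injective
    _ = Nat.card (C ⊕ scaffoldEdges Q) := by
      rw [Nat.card_sum, Nat.card_sum, Nat.card_congr eobj]

lemma exists_eq_of_surjective_withIds (hsurj : Function.Surjective (withIds g)) {a b : C}
    (f : a ⟶ b) (hab : a ≠ b) : ∃ p, g p = ⟨a, b, f⟩ := by
  obtain ⟨c | p, h⟩ := hsurj ⟨a, b, f⟩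
  · exact (hab ((congrArg Sigma.fst h).symm.trans (congrArg (·.2.1) h))).elim
  · exact ⟨p, h⟩

lemma IsRealization.eq_id_of_surjective (hg : IsRealization F g)
    (hsurj : Function.Surjective (withIds g)) {a : C} (f : a ⟶ a) : f = 𝟙 a := by
  obtain ⟨c | p, h⟩ := hsurj ⟨a, a, f⟩
  · obtain rfl : c = a := congrArg Sigma.fst h
    simpa [withIds] using h.symm
  · exact ((hg.realizes_of_eq h).ne rfl).elim

lemma IsRealization.subsingleton_hom (hg : IsRealization F g)
    (hsurj : Function.Surjective (withIds g)) (a b : C) : Subsingleton (a ⟶ b) := by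
  refine ⟨fun f f' => ?_⟩
  by_cases hab : a = b
  · subst hab
    rw [hg.eq_id_of_surjective hsurj f, hg.eq_id_of_surjective hsurj f']
  · obtain ⟨p, hp⟩ := exists_eq_of_surjective_withIds hsurj f hab
    obtain ⟨p', hp'⟩ := exists_eq_of_surjective_withIds hsurj f' hab
    obtain rfl : p = p' :=
      Subtype.ext ((hg.realizes_of_eq hp).unique p.2 p'.2 (hg.realizes_of_eq hp'))
    simpa using hp.symm.trans hp'

/-- If `F a` were not minimal, the realization of an edge into `F a`, composed with `f`,
would be a second morphism realizing the same edge as `f`. -/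
lemma IsRealization.isMin_of_surjective (hg : IsRealization F g)
    (hsurj : Function.Surjective (withIds g)) (hinj : Function.Injective F.obj)
    (hD : ∀ c, F.obj c ∈ disconnectedPoints Q) {a b : C} (f : a ⟶ b) (hab : a ≠ b) :
    IsMin (F.obj a) := by
  obtain ⟨p, hp⟩ := exists_eq_of_surjective_withIds hsurj f hab
  have hpab := hg.realizes_of_eq hp
  intro z hz
  by_contra hza
  have hlt : z < F.obj a := lt_of_le_not_ge hz hza
  let p' : scaffoldEdges Q := ⟨(compMin (F.obj a) z, F.obj a), hD a, scaffoldEdge_compMin hlt⟩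
  obtain ⟨⟨a', a'', h⟩, hp'⟩ : ∃ s, g p' = s := ⟨_, rfl⟩
  have hpa' := hg.realizes_of_eq hp'
  have hlt' : F.obj a' < F.obj a := hpa'.lt.trans_eq hpa'.1
  obtain ⟨p'', hp''⟩ := exists_eq_of_surjective_withIds hsurj (h ≫ eqToHom (hinj hpa'.1) ≫ f)
    fun h => (hlt'.trans hpab.lt).ne (congrArg F.obj h)
  obtain rfl : p'' = p := Subtype.ext <| (hg.realizes_of_eq hp'').unique p''.2 p.2
    ⟨hpab.1, mem_lowerComp_of_le hpab.2 hlt'.le⟩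
  exact hlt'.ne (congrArg (F.obj ∘ Sigma.fst) (hp''.symm.trans hp))

lemma IsRealization.isScaffold_of_surjective (hg : IsRealization F g)
    (hsurj : Function.Surjective (withIds g)) (hinj : Function.Injective F.obj)
    (hrange : Set.range F.obj = disconnectedPoints Q) :
    IsScaffold (Set.range F.obj)
      (fun x y => x ≠ y ∧ ∃ (a b : C) (_ : a ⟶ b), F.obj a = x ∧ F.obj b = y) := by
  have hD (c : C) : F.obj c ∈ disconnectedPoints Q := hrange ▸ ⟨c, rfl⟩
  refine ⟨hrange, ?_, ?_⟩
  · rintro _ _ ⟨hxy, a, b, f, rfl, rfl⟩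
    have hab : a ≠ b := fun h => hxy (congrArg F.obj h)
    obtain ⟨p, hp⟩ := exists_eq_of_surjective_withIds hsurj f hab
    exact ⟨hg.isMin_of_surjective hsurj hinj hD f hab, (hg.realizes_of_eq hp).lt, b, rfl⟩
  · rintro y ⟨d, rfl⟩ x hx
    let p₀ : scaffoldEdges Q := ⟨(compMin (F.obj d) x, F.obj d), hD d, scaffoldEdge_compMin hx⟩
    have hcomp : lowerComp (F.obj d) (compMin (F.obj d) x) = lowerComp (F.obj d) x :=
      lowerComp_eq (compMin_mem hx)
    obtain ⟨⟨a, b, f⟩, hp₀⟩ : ∃ s, g p₀ = s := ⟨_, rfl⟩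
    have h₀ := hg.realizes_of_eq hp₀
    have ha : F.obj a ∈ lowerComp (F.obj d) x := hcomp ▸ h₀.2
    refine ⟨F.obj a, ⟨⟨(h₀.lt.trans_eq h₀.1).ne, a, b, f, rfl, h₀.1⟩, ha⟩, ?_⟩
    rintro _ ⟨⟨hne, a', b', f', rfl, hb'⟩, hm⟩
    obtain ⟨p, hp⟩ := exists_eq_of_surjective_withIds hsurj f'
      fun h => hne (congrArg F.obj h ▸ hb'.symm ▸ rfl)
    obtain rfl : p = p₀ := Subtype.ext <| (hg.realizes_of_eq hp).unique p.2 p₀.2 ⟨hb', hcomp ▸ hm⟩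
    exact congrArg (F.obj ∘ Sigma.fst) (hp.symm.trans hp₀)

end Realizes

end InitialScaffold

/-- Let `Q` be a poset with finite downsets whose set of elements with disconnected
strict downset is finite, and let `F : C ⥤ Q` be a minimal initial functor: among all
initial functors into `Q`, `C` has the minimum number of objects and of morphisms.
Then `F` is faithful and injective on objects, and its image is an initial scaffold
of `Q`. -/
theorem stmt18 {Q : Type} [PartialOrder Q]
    (hfin : ∀ q : Q, (Set.Iic q).Finite)
    (hIQ : {q : Q | ¬ PosetConn (Set.Iio q)}.Finite)
    {C : Type} [SmallCategory C] (F : C ⥤ Q) [F.Initial]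
    (hmin : ∀ (C' : Type) [SmallCategory C'] (F' : C' ⥤ Q), F'.Initial →
      Cardinal.mk C ≤ Cardinal.mk C' ∧
      Cardinal.mk (Σ a b : C, a ⟶ b) ≤ Cardinal.mk (Σ a b : C', a ⟶ b)) :
    F.Faithful ∧ Function.Injective F.obj ∧
      IsScaffold (Set.range F.obj)
        (fun x y => x ≠ y ∧ ∃ (a b : C) (_ : a ⟶ b), F.obj a = x ∧ F.obj b = y) := by
  have : WellFoundedLT Q := InitialScaffold.wellFoundedLT_of_finite_Iic hfin
  have : Finite (InitialScaffold.disconnectedPoints Q) := hIQ.to_subtype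
  have : Finite (InitialScaffold.Scaffold Q) := hIQ.to_subtype
  have : Finite (InitialScaffold.scaffoldEdges Q) :=
    (InitialScaffold.scaffoldEdges_finite hfin hIQ).to_subtype
  obtain ⟨hobj, hhom⟩ := hmin _ _ InitialScaffold.Scaffold.incl_initial
  obtain ⟨hinj, hrange⟩ := InitialScaffold.injective_and_range_eq_of_subset_range
    (InitialScaffold.disconnectedPoints_subset_range F) ((Cardinal.le_def _ _).mp hobj).some
  choose g hg using fun p : InitialScaffold.scaffoldEdges Q =>
    InitialScaffold.exists_realizes F p.2
  have hg : InitialScaffold.IsRealization F g := hg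
  have hsurj := hg.surjective_withIds ((Equiv.ofInjective F.obj hinj).trans (.setCongr hrange))
    ((Cardinal.le_def _ _).mp hhom).some
  have := hg.subsingleton_hom hsurj
  exact ⟨⟨fun _ => Subsingleton.elim _ _⟩, hinj, hg.isScaffold_of_surjective hsurj hinj hrange⟩
end
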